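/- Let f : ℤ_2 → ℤ_2 be a 1-Lipschitz function that is transitive modulo 2^k for every k ≥ 1, and let g : ℤ_2 → ℤ_2 be an arbitrary 1-Lipschitz function. Then both maps x ↦ f(x + 4·g(x)) and x ↦ f(x) + 4·g(x) are 1-Lipschitz and transitive modulo 2^k for every k ≥ 1. -/

import Mathlib

/-- The map induced by `f : ℤ_[2] → ℤ_[2]` on `ℤ/2^kℤ` (for 1-Lipschitz `f` this is the
well-defined reduction of `f` modulo `2^k`). -/
noncomputable def inducedMod (f : ℤ_[2] → ℤ_[2]) (k : ℕ) : ZMod (2 ^ k) → ZMod (2 ^ k) :=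
  fun z => PadicInt.toZModPow k (f ((z.val : ℤ_[2])))

/-- `f` is transitive modulo `2^k`: the orbit of `0` under the induced map on `ℤ/2^kℤ` is
all of `ℤ/2^kℤ`. -/
def TransitiveMod (f : ℤ_[2] → ℤ_[2]) (k : ℕ) : Prop :=
  ∀ z : ZMod (2 ^ k), ∃ n : ℕ, (inducedMod f k)^[n] 0 = z

/-!
A 1-Lipschitz map that is transitive modulo every `2 ^ k` is bijective modulo every `2 ^ k`, i.e.
it is a 2-adic isometry, and adding `4 * g` to an isometry leaves an isometry. An isometry `h`
that is transitive modulo `2 ^ k` is transitive modulo `2 ^ (k + 1)` iff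
`h^[2 ^ k] 0 ≢ 0 (mod 2 ^ (k + 1))`. Since the residue field is `𝔽₂`, `h - id` halves distances,
so telescoping along the orbit of `0`, which meets every residue class modulo `2 ^ k` once, gives
`h^[2 ^ k] 0 ≡ ∑ r < 2 ^ k, (h r - r) (mod 2 ^ (k + 1))`. For `h = f + 4 * g` this sum differs
from the one for `f` by `4 * ∑ r < 2 ^ k, g r ≡ 0`, so the criterion carries transitivity from
`f` to `f + 4 * g` by induction on `k`. Finally, modulo every `2 ^ k` the map `f ∘ (id + 4 * g)` is
conjugate, by the bijection induced by `id + 4 * g`, to `(id + 4 * g) ∘ f = f + 4 * (g ∘ f)`.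
-/

open Function Finset

namespace PadicInt

variable {p : ℕ} [Fact p.Prime]

theorem norm_le_pow_iff_dvd (x : ℤ_[p]) (m : ℕ) :
    ‖x‖ ≤ (p : ℝ) ^ (-m : ℤ) ↔ (p : ℤ_[p]) ^ m ∣ x := by
  rw [norm_le_pow_iff_mem_span_pow, Ideal.mem_span_singleton]

theorem toZModPow_eq_iff_dvd {m : ℕ} {a b : ℤ_[p]} :
    toZModPow m a = toZModPow m b ↔ (p : ℤ_[p]) ^ m ∣ a - b := by
  rw [← sub_eq_zero, ← map_sub, ← RingHom.mem_ker, ker_toZModPow, Ideal.mem_span_singleton]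

theorem toZModPow_eq_iff_norm_le {m : ℕ} {a b : ℤ_[p]} :
    toZModPow m a = toZModPow m b ↔ ‖a - b‖ ≤ (p : ℝ) ^ (-m : ℤ) := by
  rw [toZModPow_eq_iff_dvd, norm_le_pow_iff_dvd]

theorem toZModPow_natCast_val {m : ℕ} (z : ZMod (p ^ m)) : toZModPow m (z.val : ℤ_[p]) = z := by
  rw [map_natCast, ZMod.natCast_zmod_val]

theorem norm_le_of_forall_norm_le_pow {x y : ℤ_[p]}
    (h : ∀ m : ℕ, ‖x‖ ≤ (p : ℝ) ^ (-m : ℤ) → ‖y‖ ≤ (p : ℝ) ^ (-m : ℤ)) : ‖y‖ ≤ ‖x‖ := by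
  by_contra! hlt
  have hy : y ≠ 0 := by rintro rfl; exact (norm_nonneg x).not_gt (by simpa using hlt)
  rw [norm_eq_zpow_neg_valuation hy] at hlt
  have hx : ‖x‖ ≤ (p : ℝ) ^ (-(y.valuation + 1 : ℕ) : ℤ) := by
    rw [norm_le_pow_iff_norm_lt_pow_add_one]
    exact hlt.trans_eq (by congr 1; push_cast; ring)
  have := h _ hx
  rw [norm_le_pow_iff_le_valuation _ hy] at this
  omega

theorem norm_add_mul_sub_eq {f g : ℤ_[p] → ℤ_[p]} {c : ℤ_[p]} (hc : ‖c‖ < 1)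
    (hf : ∀ a b, ‖f a - f b‖ = ‖a - b‖) (hg : ∀ a b, ‖g a - g b‖ ≤ ‖a - b‖) (a b : ℤ_[p]) :
    ‖(f a + c * g a) - (f b + c * g b)‖ = ‖a - b‖ := by
  rcases eq_or_ne a b with rfl | hab
  · simp
  have hlt : ‖c * (g a - g b)‖ < ‖f a - f b‖ := by
    rw [norm_mul, hf]
    calc ‖c‖ * ‖g a - g b‖ ≤ ‖c‖ * ‖a - b‖ := by gcongr; exact hg a b
      _ < ‖a - b‖ := mul_lt_of_lt_one_left (norm_pos_iff.2 (sub_ne_zero.2 hab)) hc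
  rw [show (f a + c * g a) - (f b + c * g b) = (f a - f b) + c * (g a - g b) by ring,
    norm_add_eq_max_of_ne hlt.ne', max_eq_left hlt.le, hf]

theorem toZModPow_eq_of_le {m n : ℕ} (hmn : m ≤ n) {a b : ℤ_[p]}
    (h : toZModPow n a = toZModPow n b) : toZModPow m a = toZModPow m b := by
  rw [← cast_toZModPow m n hmn, h, cast_toZModPow m n hmn]

theorem toZModPow_apply_eq {f : ℤ_[p] → ℤ_[p]} (hf : ∀ a b, ‖f a - f b‖ ≤ ‖a - b‖) {m : ℕ}
    {a b : ℤ_[p]} (h : toZModPow m a = toZModPow m b) : toZModPow m (f a) = toZModPow m (f b) := by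
  rw [toZModPow_eq_iff_norm_le] at h ⊢
  exact (hf a b).trans h

theorem toZMod_coe_units_eq_one (u : ℤ_[2]ˣ) : toZMod (u : ℤ_[2]) = 1 := by
  have := u.isUnit.map (toZMod : ℤ_[2] →+* ZMod 2)
  generalize toZMod (u : ℤ_[2]) = z at this
  fin_cases z
  · exact absurd this not_isUnit_zero
  · rfl

theorem norm_sub_lt_of_norm_eq {x y : ℤ_[2]} (hx : x ≠ 0) (h : ‖x‖ = ‖y‖) : ‖x - y‖ < ‖x‖ := by
  have hy : y ≠ 0 := by rintro rfl; simp [hx] at h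
  have hv : x.valuation = y.valuation := by
    rw [norm_eq_zpow_neg_valuation hx, norm_eq_zpow_neg_valuation hy] at h
    exact_mod_cast neg_injective (zpow_right_injective₀ (by norm_num) (by norm_num) h)
  have hunit : ‖(unitCoeff hx : ℤ_[2]) - unitCoeff hy‖ < 1 := by
    rw [← mem_nonunits, ← IsLocalRing.mem_maximalIdeal, ← ker_toZMod, RingHom.mem_ker, map_sub,
      toZMod_coe_units_eq_one, toZMod_coe_units_eq_one, sub_self]
  have hxy : x - y = ((unitCoeff hx : ℤ_[2]) - unitCoeff hy) * ((2 : ℕ) : ℤ_[2]) ^ x.valuation := by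
    conv_lhs => rw [unitCoeff_spec hx, unitCoeff_spec hy, ← hv]
    ring
  have hnx : ‖x‖ = ‖((2 : ℕ) : ℤ_[2]) ^ x.valuation‖ := by
    conv_lhs => rw [unitCoeff_spec hx]
    rw [norm_mul, norm_units, one_mul]
  calc ‖x - y‖ = ‖(unitCoeff hx : ℤ_[2]) - unitCoeff hy‖ * ‖x‖ := by rw [hxy, norm_mul, hnx]
    _ < 1 * ‖x‖ := by gcongr
    _ = ‖x‖ := one_mul _

end PadicInt

section FiniteDynamics

variable {α M : Type*} [Fintype α] {F : α → α} {x : α}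

theorem image_range_iterate_eq_univ [DecidableEq α] (h : minimalPeriod F x = Fintype.card α) :
    (range (Fintype.card α)).image (F^[·] x) = univ := by
  apply eq_univ_of_card
  rw [card_image_of_injOn, card_range]
  rw [coe_range, ← h]
  exact iterate_injOn_Iio_minimalPeriod

theorem minimalPeriod_eq_card_iff (hF : Injective F) :
    minimalPeriod F x = Fintype.card α ↔ ∀ z, ∃ n, F^[n] x = z := by
  classical
  refine ⟨fun h z => ?_, fun h => le_antisymm minimalPeriod_le_card ?_⟩
  · obtain ⟨n, -, hn⟩ := mem_image.1 ((image_range_iterate_eq_univ h).symm ▸ mem_univ z)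
    exact ⟨n, hn⟩
  · have hpos := minimalPeriod_pos_of_mem_periodicPts (hF.mem_periodicPts x)
    calc Fintype.card α = #(univ : Finset α) := card_univ.symm
      _ ≤ #((range (minimalPeriod F x)).image (F^[·] x)) := card_le_card fun z _ => by
          obtain ⟨n, rfl⟩ := h z
          exact mem_image.2 ⟨n % minimalPeriod F x, mem_range.2 (Nat.mod_lt _ hpos),
            iterate_mod_minimalPeriod_eq⟩
      _ ≤ minimalPeriod F x := card_image_le.trans (card_range _).le

theorem sum_range_card_iterate [AddCommMonoid M] (h : minimalPeriod F x = Fintype.card α)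
    (ψ : α → M) : ∑ n ∈ range (Fintype.card α), ψ (F^[n] x) = ∑ z, ψ z := by
  classical
  rw [← image_range_iterate_eq_univ h, sum_image]
  rw [coe_range, ← h]
  exact iterate_injOn_Iio_minimalPeriod

theorem exists_iterate_eq_of_minimalPeriod_eq_card (hF : Injective F)
    (h : minimalPeriod F x = Fintype.card α) (y z : α) : ∃ n, F^[n] y = z := by
  obtain ⟨m, rfl⟩ := (minimalPeriod_eq_card_iff hF).1 h y
  rw [← minimalPeriod_apply_iterate (hF.mem_periodicPts x) m] at h
  exact (minimalPeriod_eq_card_iff hF).1 h z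

theorem exists_iterate_comp_eq {Φ : α → α} (hΦ : Injective Φ) (hF : Injective F)
    (h : ∀ z, ∃ n, (Φ ∘ F)^[n] x = z) (y z : α) : ∃ n, (F ∘ Φ)^[n] y = z := by
  have hcyc := (minimalPeriod_eq_card_iff (hΦ.comp hF)).2 h
  obtain ⟨n, hn⟩ := exists_iterate_eq_of_minimalPeriod_eq_card (hΦ.comp hF) hcyc (Φ y) (Φ z)
  refine ⟨n, hΦ ?_⟩
  rw [← hn]
  exact (Semiconj.iterate_right (show Semiconj Φ (F ∘ Φ) (Φ ∘ F) from fun _ => rfl) n) y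

end FiniteDynamics

theorem ZMod.sum_range_natCast {M : Type*} [AddCommMonoid M] {n : ℕ} [NeZero n]
    (ψ : ZMod n → M) : ∑ r ∈ range n, ψ r = ∑ z, ψ z :=
  sum_nbij' (↑) ZMod.val (by simp) (by simp [ZMod.val_lt])
    (fun r hr => ZMod.val_cast_of_lt (mem_range.1 hr)) (fun z _ => ZMod.natCast_zmod_val z)
    (fun _ _ => rfl)

open PadicInt

section TwoAdic

variable {f g φ : ℤ_[2] → ℤ_[2]}

theorem toZModPow_two_pow_ne_zero (k : ℕ) : toZModPow (k + 1) ((2 : ℤ_[2]) ^ k) ≠ 0 := by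
  rw [← map_zero (toZModPow (k + 1)), Ne, toZModPow_eq_iff_dvd, sub_zero, Nat.cast_ofNat,
    pow_dvd_pow_iff two_ne_zero (by simpa using (prime_p (p := 2)).not_isUnit)]
  omega

theorem toZModPow_sub_self_eq (hf : ∀ a b, ‖f a - f b‖ = ‖a - b‖) {k : ℕ} {a b : ℤ_[2]}
    (h : toZModPow k a = toZModPow k b) :
    toZModPow (k + 1) (f a - a) = toZModPow (k + 1) (f b - b) := by
  rcases eq_or_ne a b with rfl | hab
  · rfl
  rw [toZModPow_eq_iff_norm_le] at h ⊢
  rw [norm_le_pow_iff_norm_lt_pow_add_one,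
    show f a - a - (f b - b) = -(a - b - (f a - f b)) by ring, norm_neg]
  calc ‖a - b - (f a - f b)‖ < ‖a - b‖ := norm_sub_lt_of_norm_eq (sub_ne_zero.2 hab) (hf a b).symm
    _ ≤ _ := h.trans_eq (by push_cast; ring_nf)

theorem inducedMod_toZModPow (hf : ∀ a b, ‖f a - f b‖ ≤ ‖a - b‖) (k : ℕ) (x : ℤ_[2]) :
    inducedMod f k (toZModPow k x) = toZModPow k (f x) :=
  toZModPow_apply_eq hf (toZModPow_natCast_val _)

theorem iterate_inducedMod_zero (hf : ∀ a b, ‖f a - f b‖ ≤ ‖a - b‖) (k n : ℕ) :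
    (inducedMod f k)^[n] 0 = toZModPow k (f^[n] 0) := by
  have := Semiconj.iterate_right (fun x => (inducedMod_toZModPow hf k x).symm) n 0
  simpa using this.symm

theorem inducedMod_comp (hf : ∀ a b, ‖f a - f b‖ ≤ ‖a - b‖) (k : ℕ) :
    inducedMod (f ∘ φ) k = inducedMod f k ∘ inducedMod φ k := by
  funext z
  exact (inducedMod_toZModPow hf k _).symm

theorem inducedMod_injective (hf : ∀ a b, ‖f a - f b‖ = ‖a - b‖) (k : ℕ) :
    Injective (inducedMod f k) := by
  intro a b h
  rw [← toZModPow_natCast_val a, ← toZModPow_natCast_val b, toZModPow_eq_iff_norm_le, ← hf]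
  exact toZModPow_eq_iff_norm_le.1 h

theorem transitiveMod_zero (f : ℤ_[2] → ℤ_[2]) : TransitiveMod f 0 := by
  have : Subsingleton (ZMod (2 ^ 0)) := by rw [pow_zero]; infer_instance
  exact fun _ => ⟨0, Subsingleton.elim _ _⟩

theorem transitiveMod_iff_minimalPeriod (hf : ∀ a b, ‖f a - f b‖ = ‖a - b‖) {k : ℕ} :
    TransitiveMod f k ↔ minimalPeriod (inducedMod f k) 0 = 2 ^ k := by
  rw [TransitiveMod, ← minimalPeriod_eq_card_iff (inducedMod_injective hf k), ZMod.card]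

theorem inducedMod_surjective_of_transitiveMod_succ (hf : ∀ a b, ‖f a - f b‖ ≤ ‖a - b‖) {k : ℕ}
    (ht : TransitiveMod f (k + 1)) : Surjective (inducedMod f k) := by
  intro z
  obtain ⟨x, rfl⟩ : ∃ x, toZModPow k x = z := ⟨z.val, toZModPow_natCast_val z⟩
  -- of the two lifts `x` and `x + 2 ^ k`, one is nonzero modulo `2 ^ (k + 1)`, hence a value of `f`
  obtain ⟨y, hyx, hy⟩ : ∃ y, toZModPow k y = toZModPow k x ∧ toZModPow (k + 1) y ≠ 0 := by
    by_cases hx : toZModPow (k + 1) x = 0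
    · refine ⟨x + 2 ^ k, ?_, by simpa [hx] using toZModPow_two_pow_ne_zero k⟩
      rw [toZModPow_eq_iff_dvd]
      simp
    · exact ⟨x, rfl, hx⟩
  obtain ⟨_ | n, hn⟩ := ht (toZModPow (k + 1) y)
  · exact absurd hn.symm hy
  refine ⟨toZModPow k (f^[n] 0), ?_⟩
  rw [iterate_inducedMod_zero hf, iterate_succ_apply'] at hn
  rw [inducedMod_toZModPow hf, ← hyx, toZModPow_eq_of_le k.le_succ hn]

theorem norm_sub_eq_of_transitiveMod (hf : ∀ a b, ‖f a - f b‖ ≤ ‖a - b‖)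
    (ht : ∀ k, 1 ≤ k → TransitiveMod f k) (a b : ℤ_[2]) : ‖f a - f b‖ = ‖a - b‖ := by
  refine le_antisymm (hf a b) (norm_le_of_forall_norm_le_pow fun m hm => ?_)
  have hinj : Injective (inducedMod f m) := Finite.injective_iff_surjective.2
    (inducedMod_surjective_of_transitiveMod_succ hf (ht (m + 1) (Nat.le_add_left 1 m)))
  rw [← toZModPow_eq_iff_norm_le] at hm ⊢
  rw [← inducedMod_toZModPow hf, ← inducedMod_toZModPow hf] at hm
  exact hinj hm

theorem transitiveMod_succ_iff (hf : ∀ a b, ‖f a - f b‖ = ‖a - b‖) {k : ℕ}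
    (ht : TransitiveMod f k) :
    TransitiveMod f (k + 1) ↔ toZModPow (k + 1) (f^[2 ^ k] 0) ≠ 0 := by
  have hlip : ∀ a b, ‖f a - f b‖ ≤ ‖a - b‖ := fun a b => (hf a b).le
  rw [transitiveMod_iff_minimalPeriod hf] at ht ⊢
  rw [← iterate_inducedMod_zero hlip]
  set P := minimalPeriod (inducedMod f (k + 1)) 0
  have hP : (inducedMod f (k + 1))^[P] 0 = 0 := iterate_minimalPeriod
  have hpos : 0 < P :=
    minimalPeriod_pos_of_mem_periodicPts ((inducedMod_injective hf _).mem_periodicPts 0)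
  have hle : P ≤ 2 ^ (k + 1) := minimalPeriod_le_card.trans (ZMod.card _).le
  obtain ⟨c, hc⟩ : 2 ^ k ∣ P := by
    rw [← ht]
    refine IsPeriodicPt.minimalPeriod_dvd (show (inducedMod f k)^[P] 0 = 0 from ?_)
    rw [iterate_inducedMod_zero hlip] at hP ⊢
    rw [← map_zero (toZModPow k), toZModPow_eq_of_le k.le_succ (by rwa [map_zero])]
  constructor
  · intro hPk h0
    have := IsPeriodicPt.eq_zero_of_lt_minimalPeriod h0
      (show 2 ^ k < P by rw [hPk]; exact Nat.pow_lt_pow_succ one_lt_two)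
    exact absurd this (by positivity)
  · intro h0
    have hc2 : c = 2 := by
      rcases Nat.lt_trichotomy c 2 with hlt | rfl | hgt
      · interval_cases c
        · omega
        · exact absurd (by rwa [hc, mul_one] at hP) h0
      · rfl
      · have : 2 ^ k * 2 < 2 ^ k * c := by gcongr
        rw [pow_succ] at hle
        omega
    rw [hc, hc2, pow_succ]

theorem toZModPow_iterate_two_pow (hf : ∀ a b, ‖f a - f b‖ = ‖a - b‖) {k : ℕ}
    (ht : TransitiveMod f k) :
    toZModPow (k + 1) (f^[2 ^ k] 0) =
      toZModPow (k + 1) (∑ r ∈ range (2 ^ k), (f r - r : ℤ_[2])) := by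
  set ψ : ZMod (2 ^ k) → ZMod (2 ^ (k + 1)) :=
    fun z => toZModPow (k + 1) (f z.val - (z.val : ℤ_[2]))
  have hψ (x : ℤ_[2]) : ψ (toZModPow k x) = toZModPow (k + 1) (f x - x) :=
    toZModPow_sub_self_eq hf (toZModPow_natCast_val _)
  have hcyc : minimalPeriod (inducedMod f k) 0 = Fintype.card (ZMod (2 ^ k)) := by
    rw [ZMod.card]; exact (transitiveMod_iff_minimalPeriod hf).1 ht
  have htel : f^[2 ^ k] 0 = ∑ n ∈ range (2 ^ k), (f (f^[n] 0) - f^[n] 0) := by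
    simpa [iterate_succ_apply'] using (sum_range_sub (fun n => f^[n] (0 : ℤ_[2])) (2 ^ k)).symm
  calc toZModPow (k + 1) (f^[2 ^ k] 0)
      = ∑ n ∈ range (Fintype.card (ZMod (2 ^ k))), ψ ((inducedMod f k)^[n] 0) := by
        simp only [htel, map_sum, iterate_inducedMod_zero (fun a b => (hf a b).le), hψ, ZMod.card]
    _ = ∑ z, ψ z := sum_range_card_iterate hcyc ψ
    _ = ∑ r ∈ range (2 ^ k), ψ r := (ZMod.sum_range_natCast ψ).symm
    _ = _ := by simp only [map_sum, ← hψ, map_natCast]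

theorem two_pow_dvd_two_mul_sum_range (hg : ∀ a b, ‖g a - g b‖ ≤ ‖a - b‖) (k : ℕ) :
    (2 : ℤ_[2]) ^ k ∣ 2 * ∑ r ∈ range (2 ^ k), g r := by
  induction k with
  | zero => simp
  | succ k ih =>
    -- `g (2 ^ k + r) ≡ g r (mod 2 ^ k)`: the upper half of the range repeats the lower half
    have hhalf : (2 : ℤ_[2]) ^ k ∣ ∑ r ∈ range (2 ^ k), (g ↑(2 ^ k + r) - g r) := by
      refine dvd_sum fun r _ => ?_
      have : toZModPow k ((2 ^ k + r : ℕ) : ℤ_[2]) = toZModPow k r := by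
        rw [toZModPow_eq_iff_dvd]; simp
      simpa using toZModPow_eq_iff_dvd.1 (toZModPow_apply_eq hg this)
    have := dvd_add (mul_dvd_mul_right hhalf 2) (mul_dvd_mul_right ih 2)
    rw [pow_succ, Nat.pow_succ, Nat.mul_two, sum_range_add]
    convert this using 1
    rw [sum_sub_distrib]
    ring

theorem transitiveMod_add_four_mul (hf : ∀ a b, ‖f a - f b‖ = ‖a - b‖)
    (ht : ∀ k, TransitiveMod f k) (hg : ∀ a b, ‖g a - g b‖ ≤ ‖a - b‖) (k : ℕ) :
    TransitiveMod (fun x => f x + 4 * g x) k := by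
  have hh := norm_add_mul_sub_eq (c := 4) ((norm_lt_one_iff_dvd 4).2 ⟨2, by norm_num⟩) hf hg
  induction k with
  | zero => exact transitiveMod_zero _
  | succ k ih =>
    have hf0 := (transitiveMod_succ_iff hf (ht k)).1 (ht (k + 1))
    rw [toZModPow_iterate_two_pow hf (ht k)] at hf0
    rw [transitiveMod_succ_iff hh ih, toZModPow_iterate_two_pow hh ih]
    convert hf0 using 1
    rw [toZModPow_eq_iff_dvd, ← sum_sub_distrib]
    convert mul_dvd_mul_left 2 (two_pow_dvd_two_mul_sum_range hg k) using 1
    · rw [Nat.cast_ofNat, pow_succ']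
    · simp only [mul_sum]
      exact sum_congr rfl fun r _ => by ring

theorem TransitiveMod.comp_swap (hf : ∀ a b, ‖f a - f b‖ = ‖a - b‖)
    (hφ : ∀ a b, ‖φ a - φ b‖ = ‖a - b‖) {k : ℕ} (h : TransitiveMod (φ ∘ f) k) :
    TransitiveMod (f ∘ φ) k := by
  rw [TransitiveMod, inducedMod_comp fun a b => (hφ a b).le] at h
  rw [TransitiveMod, inducedMod_comp fun a b => (hf a b).le]
  exact exists_iterate_comp_eq (inducedMod_injective hφ k) (inducedMod_injective hf k) h 0

end TwoAdic

/-- If `f : ℤ_2 → ℤ_2` is 1-Lipschitz and transitive modulo `2^k` for every `k ≥ 1`, and `g`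
is an arbitrary 1-Lipschitz function, then both `x ↦ f(x + 4·g(x))` and `x ↦ f(x) + 4·g(x)`
are 1-Lipschitz and transitive modulo `2^k` for every `k ≥ 1`. -/
theorem transitive_mod_perturbation
    (f g : ℤ_[2] → ℤ_[2])
    (hf : ∀ a b : ℤ_[2], ‖f a - f b‖ ≤ ‖a - b‖)
    (hftrans : ∀ k : ℕ, 1 ≤ k → TransitiveMod f k)
    (hg : ∀ a b : ℤ_[2], ‖g a - g b‖ ≤ ‖a - b‖) :
    ((∀ a b : ℤ_[2], ‖f (a + 4 * g a) - f (b + 4 * g b)‖ ≤ ‖a - b‖) ∧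
      (∀ k : ℕ, 1 ≤ k → TransitiveMod (fun x => f (x + 4 * g x)) k)) ∧
    ((∀ a b : ℤ_[2], ‖(f a + 4 * g a) - (f b + 4 * g b)‖ ≤ ‖a - b‖) ∧
      (∀ k : ℕ, 1 ≤ k → TransitiveMod (fun x => f x + 4 * g x) k)) := by
  have hfiso := norm_sub_eq_of_transitiveMod hf hftrans
  have htrans (k : ℕ) : TransitiveMod f k := by
    rcases k with _ | k
    · exact transitiveMod_zero f
    · exact hftrans (k + 1) (Nat.le_add_left 1 k)
  have h4 : ‖(4 : ℤ_[2])‖ < 1 := (norm_lt_one_iff_dvd 4).2 ⟨2, by norm_num⟩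
  have hφ := norm_add_mul_sub_eq h4 (f := id) (fun _ _ => rfl) hg
  refine ⟨⟨fun a b => (hf _ _).trans (hφ a b).le, fun k _ => ?_⟩,
    fun a b => (norm_add_mul_sub_eq h4 hfiso hg a b).le,
    fun k _ => transitiveMod_add_four_mul hfiso htrans hg k⟩
  exact TransitiveMod.comp_swap (φ := fun x => x + 4 * g x) hfiso hφ
    (transitiveMod_add_four_mul hfiso htrans (fun a b => (hg _ _).trans (hfiso a b).le) k)
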